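/- Assume n = 2. Let A, B ∈ M₂(ℂ) satisfy Ā·A = B̄·B = I₂, and let *_A and *_B be the corresponding *-structures on the Radford algebra H given by g^{*_A} = g, x^{*_A} = a₁₁x + a₁₂y, y^{*_A} = a₂₁x + a₂₂y (where A = (a_{ij})), and similarly for B. Then *_A and *_B are equivalent *-structures on H if and only if there exists an invertible matrix Λ ∈ M₂(ℂ) such that AΛ = Λ̄B, where Λ̄ denotes the entrywise complex conjugate of Λ. -/

import Mathlib

open TensorProduct

noncomputable section

/-- The Gaussian (`q`-)binomial coefficient `C(m, k)_q`, defined by the `q`-Pascal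
recurrence `C(m+1, k+1)_q = C(m, k)_q + q^(k+1) * C(m, k+1)_q`. -/
def qBinom (q : ℂ) : ℕ → ℕ → ℂ
  | _, 0 => 1
  | 0, _ + 1 => 0
  | m + 1, k + 1 => qBinom q m k + q ^ (k + 1) * qBinom q m (k + 1)

/-- The Radford algebra: a Hopf algebra `H` over `ℂ` generated by elements
`g, x, y` subject to the relations `g^n = 1`, `x^n = y^n = 0`, `xg = ω g x`,
`g y = ω y g`, `x y = ω y x`, where `ω` is a root of unity of order `n > 1`,
with the comultiplication, counit and antipode determined by
`Δ(g) = g ⊗ g`, `ε(g) = 1`, `S(g) = g^(n-1)`,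
`Δ(x) = x ⊗ g + 1 ⊗ x`, `ε(x) = 0`, `S(x) = -x g^(n-1)`,
`Δ(y) = y ⊗ g + 1 ⊗ y`, `ε(y) = 0`, `S(y) = -y g^(n-1)`,
and with canonical `ℂ`-basis `{y^r x^s g^l | 0 ≤ r, s, l < n}`. -/
structure RadfordAlgebra (n : ℕ) (ω : ℂ) (H : Type*) [Ring H] [HopfAlgebra ℂ H] where
  g : H
  x : H
  y : H
  hn : 1 < n
  hω : IsPrimitiveRoot ω n
  g_pow : g ^ n = 1
  x_pow : x ^ n = 0
  y_pow : y ^ n = 0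
  rel_xg : x * g = ω • (g * x)
  rel_gy : g * y = ω • (y * g)
  rel_xy : x * y = ω • (y * x)
  comul_g : Coalgebra.comul (R := ℂ) g = g ⊗ₜ[ℂ] g
  counit_g : Coalgebra.counit (R := ℂ) g = 1
  antipode_g : HopfAlgebra.antipode (R := ℂ) g = g ^ (n - 1)
  comul_x : Coalgebra.comul (R := ℂ) x = x ⊗ₜ[ℂ] g + 1 ⊗ₜ[ℂ] x
  counit_x : Coalgebra.counit (R := ℂ) x = 0
  antipode_x : HopfAlgebra.antipode (R := ℂ) x = -(x * g ^ (n - 1))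
  comul_y : Coalgebra.comul (R := ℂ) y = y ⊗ₜ[ℂ] g + 1 ⊗ₜ[ℂ] y
  counit_y : Coalgebra.counit (R := ℂ) y = 0
  antipode_y : HopfAlgebra.antipode (R := ℂ) y = -(y * g ^ (n - 1))
  gen : Algebra.adjoin ℂ ({g, x, y} : Set H) = ⊤
  basis : Module.Basis (Fin n × Fin n × Fin n) ℂ H
  basis_eq : ∀ r s l : Fin n, basis (r, s, l) = y ^ (r : ℕ) * x ^ (s : ℕ) * g ^ (l : ℕ)

/-- A `*`-structure on a Hopf algebra `H` over `ℂ`: a conjugate-linear map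
`* : H → H` such that `(h*)* = h`, `(hl)* = l* h*`,
`Δ(h*) = Σ (h₁)* ⊗ (h₂)*` and `S(S(h*)*) = h` for all `h, l ∈ H`.
(The condition on `Δ` is expressed via the auxiliary additive map `starTensor`
on `H ⊗[ℂ] H` sending `a ⊗ b` to `a* ⊗ b*`, which is uniquely determined by
its two defining properties.) -/
structure HopfStarStructure (H : Type*) [Ring H] [HopfAlgebra ℂ H] where
  star : H → H
  star_add : ∀ a b : H, star (a + b) = star a + star b
  star_smul : ∀ (c : ℂ) (a : H), star (c • a) = (starRingEnd ℂ c) • star a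
  star_star : ∀ a : H, star (star a) = a
  star_mul : ∀ a b : H, star (a * b) = star b * star a
  starTensor : H ⊗[ℂ] H → H ⊗[ℂ] H
  starTensor_add : ∀ u v : H ⊗[ℂ] H, starTensor (u + v) = starTensor u + starTensor v
  starTensor_tmul : ∀ a b : H, starTensor (a ⊗ₜ[ℂ] b) = star a ⊗ₜ[ℂ] star b
  comul_star : ∀ a : H,
    Coalgebra.comul (R := ℂ) (star a) = starTensor (Coalgebra.comul (R := ℂ) a)
  antipode_star : ∀ a : H,
    HopfAlgebra.antipode (R := ℂ) (star (HopfAlgebra.antipode (R := ℂ) (star a))) = a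

/-- Two `*`-structures `*'` and `*''` on a Hopf algebra `H` over `ℂ` are
equivalent if there is a Hopf algebra automorphism `ψ` of `H` such that
`ψ(h^{*'}) = ψ(h)^{*''}` for all `h ∈ H`. -/
def HopfStarStructure.Equivalent {H : Type*} [Ring H] [HopfAlgebra ℂ H]
    (s₁ s₂ : HopfStarStructure H) : Prop :=
  ∃ ψ : H ≃ₐc[ℂ] H, ∀ h : H, ψ (s₁.star h) = s₂.star (ψ h)


/-!
If `Ā A = B̄ B = 1`, the matrix condition always holds: every `L_μ = μ • 1 + μ̄ • Ā B`
satisfies `A L_μ = L̄_μ B`, and some `L_μ` is invertible, since writing it as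
`μ̄ • (t • 1 + Ā B)` with `t = μ / μ̄`, the Cayley transform `t = (1 + s i) / (1 - s i)` of a
real `s` takes infinitely many values and so avoids the eigenvalues of `-Ā B`. Conversely, an
invertible `L` with `A L = L̄ B` acts on the span of `x, y`; for `n = 2` (so `ω = -1`) this substitution
preserves the defining relations and the coproduct, hence extends, by the universal property
coming from the PBW basis `y^r x^s g^l`, to a Hopf algebra automorphism `ψ_L`. Both
`ψ_L ∘ *_A` and `*_B ∘ ψ_L` are conjugate-linear antimultiplicative and agree on `g, x, y`.
-/

theorem pow_mul_pow_of_mul_eq_smul {K A : Type*} [CommSemiring K] [Semiring A] [Algebra K A]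
    {a b : A} {c : K} (h : a * b = c • (b * a)) (m k : ℕ) :
    a ^ m * b ^ k = c ^ (m * k) • (b ^ k * a ^ m) := by
  have h₁ : ∀ k : ℕ, a * b ^ k = c ^ k • (b ^ k * a) := by
    intro k
    induction k with
    | zero => simp
    | succ k ih =>
      rw [pow_succ, ← mul_assoc, ih, smul_mul_assoc, mul_assoc, h, mul_smul_comm, smul_smul,
        ← pow_succ, ← mul_assoc, ← pow_succ]
  induction m with
  | zero => simp
  | succ m ih =>
    rw [pow_succ, mul_assoc, h₁, mul_smul_comm, ← mul_assoc, ih, smul_mul_assoc, smul_smul,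
      mul_assoc, ← pow_succ, ← pow_add, Nat.succ_mul, add_comm k]

namespace Complex

theorem one_sub_ofReal_mul_I_ne_zero (s : ℝ) : 1 - s * I ≠ 0 := fun h => by
  simpa using congrArg re h

theorem cayley_injective : Function.Injective fun s : ℝ => (1 + s * I) / (1 - s * I) := by
  intro s s' h
  rw [div_eq_div_iff (one_sub_ofReal_mul_I_ne_zero s) (one_sub_ofReal_mul_I_ne_zero s')] at h
  have h' : ((2 * (s - s') : ℝ) : ℂ) * I = 0 := by push_cast; linear_combination h
  simpa [sub_eq_zero, I_ne_zero] using h'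

end Complex

namespace Matrix

variable {n : Type*} [Fintype n] [DecidableEq n]

theorem mul_smul_one_add_star_smul_eq {K : Type*} [CommRing K] [StarRing K]
    {A B : Matrix n n K} (hA : A.map (starRingEnd K) * A = 1)
    (hB : B.map (starRingEnd K) * B = 1) (μ : K) :
    A * (μ • 1 + star μ • (A.map (starRingEnd K) * B)) =
      (μ • 1 + star μ • (A.map (starRingEnd K) * B)).map (starRingEnd K) * B := by
  have hA' : A * A.map (starRingEnd K) = 1 := mul_eq_one_comm.mp hA
  have hconj : (μ • 1 + star μ • (A.map (starRingEnd K) * B)).map (starRingEnd K) =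
      star μ • 1 + μ • (A * B.map (starRingEnd K)) := by
    ext i j
    simp [Matrix.mul_apply, Matrix.one_apply, starRingEnd_apply, apply_ite star]
  rw [hconj]
  simp only [mul_add, add_mul, Matrix.mul_smul, Matrix.smul_mul, mul_one, one_mul,
    ← Matrix.mul_assoc, hA', Matrix.mul_assoc A, hB]
  abel

theorem exists_isUnit_smul_one_add_star_smul (M : Matrix n n ℂ) :
    ∃ μ : ℂ, IsUnit (μ • (1 : Matrix n n ℂ) + star μ • M) := by
  obtain ⟨_, ⟨s, rfl⟩, hs⟩ := (Set.infinite_range_of_injective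
    Complex.cayley_injective).exists_notMem_finset (-M).charpoly.roots.toFinset
  set t := (1 + s * Complex.I) / (1 - s * Complex.I)
  have hstar : star (1 + s * Complex.I) = 1 - s * Complex.I := by
    simp [sub_eq_add_neg]
  have hfactor : (1 + s * Complex.I) • (1 : Matrix n n ℂ) + star (1 + s * Complex.I) • M =
      (1 - s * Complex.I) • (scalar n t - (-M)) := by
    rw [hstar, sub_neg_eq_add, scalar_apply, ← smul_one_eq_diagonal, smul_add, smul_smul,
      mul_div_cancel₀ _ (Complex.one_sub_ofReal_mul_I_ne_zero s)]
  have hroot : (-M).charpoly.eval t ≠ 0 := fun h =>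
    hs (Multiset.mem_toFinset.mpr ((Polynomial.mem_roots (charpoly_monic _).ne_zero).mpr h))
  refine ⟨1 + s * Complex.I, ?_⟩
  rw [hfactor, isUnit_iff_isUnit_det, det_smul, ← eval_charpoly]
  exact ((isUnit_iff_ne_zero.mpr (Complex.one_sub_ofReal_mul_I_ne_zero s)).pow _).mul
    (isUnit_iff_ne_zero.mpr hroot)

theorem exists_isUnit_mul_eq_map_mul {A B : Matrix n n ℂ} (hA : A.map (starRingEnd ℂ) * A = 1)
    (hB : B.map (starRingEnd ℂ) * B = 1) :
    ∃ L : Matrix n n ℂ, IsUnit L ∧ A * L = L.map (starRingEnd ℂ) * B := by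
  obtain ⟨μ, hμ⟩ := exists_isUnit_smul_one_add_star_smul (A.map (starRingEnd ℂ) * B)
  exact ⟨_, hμ, mul_smul_one_add_star_smul_eq hA hB μ⟩

end Matrix

structure RadfordRelations (n : ℕ) (ω : ℂ) {A : Type*} [Ring A] [Algebra ℂ A] (g x y : A) :
    Prop where
  g_pow : g ^ n = 1
  x_pow : x ^ n = 0
  y_pow : y ^ n = 0
  x_mul_g : x * g = ω • (g * x)
  g_mul_y : g * y = ω • (y * g)
  x_mul_y : x * y = ω • (y * x)

namespace RadfordRelations

variable {n : ℕ} {ω : ℂ} {A : Type*} [Ring A] [Algebra ℂ A] {g x y : A}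

theorem g_mul_x (h : RadfordRelations n ω g x y) (hω : ω ≠ 0) : g * x = ω⁻¹ • (x * g) := by
  rw [h.x_mul_g, smul_smul, inv_mul_cancel₀ hω, one_smul]

theorem monomial_mul_monomial (h : RadfordRelations n ω g x y) (hω : ω ≠ 0)
    (r s l r' s' l' : ℕ) :
    y ^ r * x ^ s * g ^ l * (y ^ r' * x ^ s' * g ^ l') =
      (ω ^ (l * r') * ω ^ (s * r') * ω⁻¹ ^ (l * s')) •
        (y ^ (r + r') * x ^ (s + s') * g ^ (l + l')) := by
  have hgy := pow_mul_pow_of_mul_eq_smul h.g_mul_y l r'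
  have hxy := pow_mul_pow_of_mul_eq_smul h.x_mul_y s r'
  have hgx := pow_mul_pow_of_mul_eq_smul (h.g_mul_x hω) l s'
  calc y ^ r * x ^ s * g ^ l * (y ^ r' * x ^ s' * g ^ l')
      = y ^ r * x ^ s * (g ^ l * y ^ r') * x ^ s' * g ^ l' := by simp only [mul_assoc]
    _ = ω ^ (l * r') • (y ^ r * (x ^ s * y ^ r') * (g ^ l * x ^ s') * g ^ l') := by
        rw [hgy]; simp only [mul_assoc, smul_mul_assoc, mul_smul_comm]
    _ = _ := by
        rw [hxy, hgx]
        simp only [pow_add, mul_assoc, smul_mul_assoc, mul_smul_comm, smul_smul]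
        congr 1; ring

theorem smul_add_smul (h : RadfordRelations 2 (-1) g x y) (a b c d : ℂ) :
    RadfordRelations 2 (-1) g (a • x + b • y) (c • x + d • y) := by
  have hx : x * x = 0 := by rw [← sq, h.x_pow]
  have hy : y * y = 0 := by rw [← sq, h.y_pow]
  have hyg : y * g = (-1 : ℂ) • (g * y) := by rw [h.g_mul_y, smul_smul]; norm_num
  refine ⟨h.g_pow, ?_, ?_, ?_, ?_, ?_⟩ <;>
    simp only [sq, add_mul, mul_add, smul_mul_assoc, mul_smul_comm, hx, hy, h.x_mul_y, hyg,
      h.x_mul_g, smul_zero] <;>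
    module

end RadfordRelations

namespace RadfordAlgebra

section Lift

variable {n : ℕ} {ω : ℂ} {H : Type*} [Ring H] [HopfAlgebra ℂ H] (R : RadfordAlgebra n ω H)
  {A : Type*} [Ring A] [Algebra ℂ A] {g x y : A}

theorem relations : RadfordRelations n ω R.g R.x R.y :=
  ⟨R.g_pow, R.x_pow, R.y_pow, R.rel_xg, R.rel_gy, R.rel_xy⟩

theorem omega_ne_zero (R : RadfordAlgebra n ω H) : ω ≠ 0 :=
  R.hω.ne_zero (by have := R.hn; omega)

def liftLinear (g x y : A) : H →ₗ[ℂ] A :=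
  R.basis.constr ℂ fun i => y ^ (i.1 : ℕ) * x ^ (i.2.1 : ℕ) * g ^ (i.2.2 : ℕ)

theorem liftLinear_monomial (h : RadfordRelations n ω g x y) (r s l : ℕ) :
    R.liftLinear g x y (R.y ^ r * R.x ^ s * R.g ^ l) = y ^ r * x ^ s * g ^ l := by
  have hn : 0 < n := by have := R.hn; omega
  rcases lt_or_ge r n with hr | hr
  swap
  · simp [pow_eq_zero_of_le hr R.y_pow, pow_eq_zero_of_le hr h.y_pow]
  rcases lt_or_ge s n with hs | hs
  swap
  · simp [pow_eq_zero_of_le hs R.x_pow, pow_eq_zero_of_le hs h.x_pow]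
  rw [← Nat.mod_add_div l n, pow_add, pow_add, pow_mul, pow_mul, R.g_pow, h.g_pow, one_pow,
    one_pow, mul_one, mul_one, ← R.basis_eq ⟨r, hr⟩ ⟨s, hs⟩ ⟨l % n, Nat.mod_lt l hn⟩,
    liftLinear, Module.Basis.constr_basis]

def lift (h : RadfordRelations n ω g x y) : H →ₐ[ℂ] A :=
  AlgHom.ofLinearMap (R.liftLinear g x y)
    (by simpa using R.liftLinear_monomial h 0 0 0)
    (by
      have hmul : (LinearMap.mul ℂ H).compr₂ (R.liftLinear g x y) =
          (LinearMap.mul ℂ A).compl₁₂ (R.liftLinear g x y) (R.liftLinear g x y) := by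
        refine R.basis.ext fun i => R.basis.ext fun j => ?_
        simp only [LinearMap.compr₂_apply, LinearMap.compl₁₂_apply, LinearMap.mul_apply',
          R.basis_eq, R.relations.monomial_mul_monomial R.omega_ne_zero, map_smul,
          R.liftLinear_monomial h, h.monomial_mul_monomial R.omega_ne_zero]
      exact fun u v => LinearMap.congr_fun₂ hmul u v)

theorem lift_monomial (h : RadfordRelations n ω g x y) (r s l : ℕ) :
    R.lift h (R.y ^ r * R.x ^ s * R.g ^ l) = y ^ r * x ^ s * g ^ l :=
  R.liftLinear_monomial h r s l

theorem lift_g (h : RadfordRelations n ω g x y) : R.lift h R.g = g := by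
  simpa using R.lift_monomial h 0 0 1

theorem lift_x (h : RadfordRelations n ω g x y) : R.lift h R.x = x := by
  simpa using R.lift_monomial h 0 1 0

theorem lift_y (h : RadfordRelations n ω g x y) : R.lift h R.y = y := by
  simpa using R.lift_monomial h 1 0 0

theorem algHom_ext {f₁ f₂ : H →ₐ[ℂ] A} (hg : f₁ R.g = f₂ R.g) (hx : f₁ R.x = f₂ R.x)
    (hy : f₁ R.y = f₂ R.y) : f₁ = f₂ :=
  AlgHom.ext_of_adjoin_eq_top R.gen (by rintro z (rfl | rfl | rfl) <;> assumption)

end Lift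

section Two

variable {ω : ℂ} {H : Type*} [Ring H] [HopfAlgebra ℂ H] (R : RadfordAlgebra 2 ω H)

theorem relations_smul_add_smul (L : Matrix (Fin 2) (Fin 2) ℂ) :
    RadfordRelations 2 ω R.g (L 0 0 • R.x + L 0 1 • R.y) (L 1 0 • R.x + L 1 1 • R.y) := by
  obtain rfl : ω = -1 := R.hω.eq_neg_one_of_two_right
  exact R.relations.smul_add_smul _ _ _ _

def matrixAlgHom (L : Matrix (Fin 2) (Fin 2) ℂ) : H →ₐ[ℂ] H :=
  R.lift (R.relations_smul_add_smul L)

variable (L M : Matrix (Fin 2) (Fin 2) ℂ)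

@[simp] theorem matrixAlgHom_g : R.matrixAlgHom L R.g = R.g := R.lift_g _

@[simp] theorem matrixAlgHom_x : R.matrixAlgHom L R.x = L 0 0 • R.x + L 0 1 • R.y :=
  R.lift_x _

@[simp] theorem matrixAlgHom_y : R.matrixAlgHom L R.y = L 1 0 • R.x + L 1 1 • R.y :=
  R.lift_y _

theorem matrixAlgHom_comp :
    (R.matrixAlgHom L).comp (R.matrixAlgHom M) = R.matrixAlgHom (M * L) := by
  refine R.algHom_ext ?_ ?_ ?_ <;>
    simp only [AlgHom.comp_apply, matrixAlgHom_g, matrixAlgHom_x, matrixAlgHom_y, map_add,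
      map_smul, Matrix.mul_apply, Fin.sum_univ_two] <;>
    module

theorem matrixAlgHom_one : R.matrixAlgHom 1 = AlgHom.id ℂ H :=
  R.algHom_ext (by simp) (by simp) (by simp)

def matrixAlgEquiv (hL : IsUnit L) : H ≃ₐ[ℂ] H :=
  have hdet := (Matrix.isUnit_iff_isUnit_det L).mp hL
  AlgEquiv.ofAlgHom (R.matrixAlgHom L) (R.matrixAlgHom L⁻¹)
    (by rw [matrixAlgHom_comp, Matrix.nonsing_inv_mul L hdet, matrixAlgHom_one])
    (by rw [matrixAlgHom_comp, Matrix.mul_nonsing_inv L hdet, matrixAlgHom_one])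

theorem counitAlgHom_comp_matrixAlgHom :
    (Bialgebra.counitAlgHom ℂ H).comp (R.matrixAlgHom L) = Bialgebra.counitAlgHom ℂ H :=
  R.algHom_ext (by simp) (by simp [R.counit_x, R.counit_y]) (by simp [R.counit_x, R.counit_y])

theorem map_comp_comulAlgHom_matrixAlgHom :
    (Algebra.TensorProduct.map (R.matrixAlgHom L) (R.matrixAlgHom L)).comp
      (Bialgebra.comulAlgHom ℂ H) = (Bialgebra.comulAlgHom ℂ H).comp (R.matrixAlgHom L) := by
  refine R.algHom_ext ?_ ?_ ?_ <;>
    simp only [AlgHom.coe_comp, Function.comp_apply, Bialgebra.comulAlgHom_apply, R.comul_g,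
      R.comul_x, R.comul_y, map_add, map_smul, map_one, Algebra.TensorProduct.map_tmul,
      matrixAlgHom_g, matrixAlgHom_x, matrixAlgHom_y, TensorProduct.add_tmul,
      TensorProduct.tmul_add, TensorProduct.smul_tmul, TensorProduct.tmul_smul, smul_add] <;>
    abel

def matrixBialgEquiv (hL : IsUnit L) : H ≃ₐc[ℂ] H :=
  BialgEquiv.ofAlgEquiv (R.matrixAlgEquiv L hL) (R.counitAlgHom_comp_matrixAlgHom L)
    (R.map_comp_comulAlgHom_matrixAlgHom L)

end Two

end RadfordAlgebra

namespace HopfStarStructure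

variable {H H' : Type*} [Ring H] [HopfAlgebra ℂ H] [Ring H'] [HopfAlgebra ℂ H']

theorem star_one (s : HopfStarStructure H) : s.star 1 = 1 := by
  simpa [s.star_star] using (s.star_mul (s.star 1) 1).symm

theorem star_algebraMap (s : HopfStarStructure H) (c : ℂ) :
    s.star (algebraMap ℂ H c) = algebraMap ℂ H (starRingEnd ℂ c) := by
  rw [Algebra.algebraMap_eq_smul_one, s.star_smul, s.star_one, Algebra.algebraMap_eq_smul_one]

theorem map_star_of_adjoin_eq_top (s₁ : HopfStarStructure H) (s₂ : HopfStarStructure H')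
    (ψ : H →ₐ[ℂ] H') {S : Set H} (hS : Algebra.adjoin ℂ S = ⊤)
    (hψ : ∀ z ∈ S, ψ (s₁.star z) = s₂.star (ψ z)) (a : H) :
    ψ (s₁.star a) = s₂.star (ψ a) := by
  induction (hS ▸ Algebra.mem_top : a ∈ Algebra.adjoin ℂ S) using Algebra.adjoin_induction with
  | mem z hz => exact hψ z hz
  | algebraMap c => rw [s₁.star_algebraMap, AlgHom.commutes, AlgHom.commutes, s₂.star_algebraMap]
  | add u v _ _ hu hv => rw [s₁.star_add, map_add, map_add, s₂.star_add, hu, hv]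
  | mul u v _ _ hu hv => rw [s₁.star_mul, map_mul, map_mul, s₂.star_mul, hu, hv]

end HopfStarStructure

namespace RadfordAlgebra

variable {ω : ℂ} {H : Type*} [Ring H] [HopfAlgebra ℂ H] (R : RadfordAlgebra 2 ω H)

def IsMatrixStar (A : Matrix (Fin 2) (Fin 2) ℂ) (s : HopfStarStructure H) : Prop :=
  s.star R.g = R.g ∧ s.star R.x = A 0 0 • R.x + A 0 1 • R.y ∧
    s.star R.y = A 1 0 • R.x + A 1 1 • R.y

theorem matrixAlgHom_star {A B L : Matrix (Fin 2) (Fin 2) ℂ} {stA stB : HopfStarStructure H}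
    (hstA : R.IsMatrixStar A stA) (hstB : R.IsMatrixStar B stB)
    (hL : A * L = L.map (starRingEnd ℂ) * B) (a : H) :
    R.matrixAlgHom L (stA.star a) = stB.star (R.matrixAlgHom L a) := by
  obtain ⟨hAg, hAx, hAy⟩ := hstA
  obtain ⟨hBg, hBx, hBy⟩ := hstB
  have hL' (i j) := congrFun (congrFun hL i) j
  simp only [Matrix.mul_apply, Fin.sum_univ_two, Matrix.map_apply] at hL'
  refine stA.map_star_of_adjoin_eq_top stB _ R.gen ?_ a
  rintro z (rfl | rfl | rfl) <;>
    simp only [hAg, hAx, hAy, map_add, map_smul, matrixAlgHom_g, matrixAlgHom_x,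
      matrixAlgHom_y, stB.star_add, stB.star_smul, hBg, hBx, hBy, smul_add, smul_smul]
  · match_scalars
    · linear_combination hL' 0 0
    · linear_combination hL' 0 1
  · match_scalars
    · linear_combination hL' 1 0
    · linear_combination hL' 1 1

end RadfordAlgebra

/-- for `n = 2`, the `*`-structures `*_A` and `*_B` determined
by matrices `A, B ∈ M₂(ℂ)` with `Ā A = B̄ B = I₂` are equivalent iff there is
an invertible `Λ ∈ M₂(ℂ)` with `A Λ = Λ̄ B`. -/
theorem radford_star_equivalence_iff
    {ω : ℂ} {H : Type*} [Ring H] [HopfAlgebra ℂ H]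
    (R : RadfordAlgebra 2 ω H) (A B : Matrix (Fin 2) (Fin 2) ℂ)
    (hA : A.map (starRingEnd ℂ) * A = 1) (hB : B.map (starRingEnd ℂ) * B = 1)
    (stA stB : HopfStarStructure H)
    (hstA : stA.star R.g = R.g ∧
      stA.star R.x = A 0 0 • R.x + A 0 1 • R.y ∧
      stA.star R.y = A 1 0 • R.x + A 1 1 • R.y)
    (hstB : stB.star R.g = R.g ∧
      stB.star R.x = B 0 0 • R.x + B 0 1 • R.y ∧
      stB.star R.y = B 1 0 • R.x + B 1 1 • R.y) :
    stA.Equivalent stB ↔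
      ∃ L : Matrix (Fin 2) (Fin 2) ℂ, IsUnit L ∧ A * L = L.map (starRingEnd ℂ) * B := by
  constructor
  · exact fun _ => Matrix.exists_isUnit_mul_eq_map_mul hA hB
  · rintro ⟨L, hL, hAL⟩
    exact ⟨R.matrixBialgEquiv L hL, R.matrixAlgHom_star hstA hstB hAL⟩
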